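/- (Corollary 1: irreversible reaction with degradation.) Fix k_d > 0, r0 > 1, and t > 0. For k_f > 0 set α = 1 + k_f/(4π), β = √k_d, γ = −√k_d, and let F(k_f) = (k_f·exp(−k_d·t)/(4π·r0))·[ α·W((r0−1)/(2√t), α·√t)/((γ−α)(α−β)) + β·W((r0−1)/(2√t), β·√t)/((β−γ)(α−β)) + γ·W((r0−1)/(2√t), γ·√t)/((β−γ)(γ−α)) ]. Then as k_f → ∞, F(k_f) converges to (1/(2·r0))·[ exp(√k_d·(r0−1))·erfc((r0−1)/(2√t) + √(k_d·t)) + exp(−√k_d·(r0−1))·erfc((r0−1)/(2√t) − √(k_d·t)) ]. -/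

import Mathlib

open Filter Topology

/-- The complementary error function `erfc(x) = (2/√π)·∫_x^∞ exp(−u²) du`. -/
noncomputable def erfc (x : ℝ) : ℝ :=
  (2 / Real.sqrt Real.pi) * ∫ u in Set.Ioi x, Real.exp (-u ^ 2)

/-- `W(n,m) = exp(2·n·m + m²)·erfc(n+m)`. -/
noncomputable def W (n m : ℝ) : ℝ :=
  Real.exp (2 * n * m + m ^ 2) * erfc (n + m)

/-!
As `k_f → ∞` the pole `α = 1 + k_f/(4π)` runs off to infinity while `k_f/(4π) = α - 1`.
The prefactor `α - 1` therefore turns both partial-fraction coefficients at the fixed poles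
`±√k_d` into `1/2 + o(1)`, and the coefficient of `W(·, α√t)` into `-1 + o(1)`. That last
term still vanishes, because the Mills-ratio bound `erfc x ≤ exp(-x²)/(√π x)` gives
`W(n, m) ≤ exp(-n²)/(√π (n + m)) → 0` as `m → ∞`.
-/

open Real

lemma erfc_nonneg (x : ℝ) : 0 ≤ erfc x :=
  mul_nonneg (by positivity) <|
    MeasureTheory.setIntegral_nonneg measurableSet_Ioi fun u _ => (exp_pos _).le

lemma integral_Ioi_mul_exp_neg_sq (x : ℝ) :
    ∫ u in Set.Ioi x, u * exp (-u ^ 2) = exp (-x ^ 2) / 2 := by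
  have hderiv : ∀ u ∈ Set.Ici x,
      HasDerivAt (fun u : ℝ => -exp (-u ^ 2) / 2) (u * exp (-u ^ 2)) u := by
    intro u _
    refine ((hasDerivAt_pow 2 u).fun_neg.exp.fun_neg.div_const 2).congr_deriv ?_
    simp only [Nat.cast_ofNat, Nat.add_one_sub_one, pow_one]
    ring
  have hint : MeasureTheory.IntegrableOn (fun u : ℝ => u * exp (-u ^ 2)) (Set.Ioi x) := by
    simpa using (integrable_mul_exp_neg_mul_sq one_pos).integrableOn
  have hlim : Tendsto (fun u : ℝ => -exp (-u ^ 2) / 2) atTop (𝓝 0) := by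
    have := (tendsto_exp_neg_atTop_nhds_zero.comp (tendsto_pow_atTop two_ne_zero)).neg.div_const 2
    simpa [Function.comp_def] using this
  rw [MeasureTheory.integral_Ioi_of_hasDerivAt_of_tendsto' hderiv hint hlim]
  ring

lemma erfc_le_exp_neg_sq_div {x : ℝ} (hx : 0 < x) :
    erfc x ≤ exp (-x ^ 2) / (√π * x) := by
  have hint : MeasureTheory.IntegrableOn (fun u : ℝ => exp (-u ^ 2)) (Set.Ioi x) := by
    simpa using (integrable_exp_neg_mul_sq one_pos).integrableOn
  have hint' : MeasureTheory.IntegrableOn (fun u : ℝ => u * exp (-u ^ 2) / x) (Set.Ioi x) := by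
    simpa using ((integrable_mul_exp_neg_mul_sq one_pos).div_const x).integrableOn
  have hmono : ∫ u in Set.Ioi x, exp (-u ^ 2) ≤ ∫ u in Set.Ioi x, u * exp (-u ^ 2) / x := by
    refine MeasureTheory.setIntegral_mono_on hint hint' measurableSet_Ioi fun u hu => ?_
    rw [le_div_iff₀ hx, mul_comm]
    exact mul_le_mul_of_nonneg_right (le_of_lt hu) (exp_pos _).le
  rw [MeasureTheory.integral_div, integral_Ioi_mul_exp_neg_sq] at hmono
  calc erfc x ≤ (2 / √π) * (exp (-x ^ 2) / 2 / x) :=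
        mul_le_mul_of_nonneg_left hmono (by positivity)
    _ = exp (-x ^ 2) / (√π * x) := by field_simp

lemma W_le {n m : ℝ} (h : 0 < n + m) : W n m ≤ exp (-n ^ 2) / (√π * (n + m)) :=
  calc W n m ≤ exp (2 * n * m + m ^ 2) * (exp (-(n + m) ^ 2) / (√π * (n + m))) :=
        mul_le_mul_of_nonneg_left (erfc_le_exp_neg_sq_div h) (exp_pos _).le
    _ = exp (-n ^ 2) / (√π * (n + m)) := by
        rw [mul_div_assoc', ← exp_add]
        ring_nf

lemma tendsto_W_atTop (n : ℝ) : Tendsto (W n) atTop (𝓝 0) := by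
  refine squeeze_zero' (.of_forall fun m => mul_nonneg (exp_pos _).le (erfc_nonneg _)) ?_
    ((tendsto_const_nhds (x := exp (-n ^ 2))).div_atTop
      ((tendsto_atTop_add_const_left _ n tendsto_id).const_mul_atTop (sqrt_pos.2 pi_pos)))
  filter_upwards [eventually_gt_atTop (-n)] with m hm
  exact W_le (by linarith)

lemma exp_neg_sq_mul_W (n m : ℝ) : exp (-m ^ 2) * W n m = exp (2 * n * m) * erfc (n + m) := by
  rw [W, ← mul_assoc, ← exp_add]
  ring_nf

lemma tendsto_sub_div_sub_atTop (c d : ℝ) :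
    Tendsto (fun x : ℝ => (x - c) / (x - d)) atTop (𝓝 1) := by
  have h : Tendsto (fun x : ℝ => 1 + (d - c) / (x - d)) atTop (𝓝 (1 + 0)) :=
    tendsto_const_nhds.add <| tendsto_const_nhds.div_atTop <|
      tendsto_atTop_add_const_right _ _ tendsto_id
  rw [add_zero] at h
  refine h.congr' ?_
  filter_upwards [eventually_gt_atTop d] with x hx
  field_simp [(sub_pos.2 hx).ne']
  ring

lemma tendsto_sub_mul_partialFractions_W (c n β γ : ℝ) {s : ℝ} (hs : 0 < s) :
    Tendsto (fun α : ℝ => (α - c) *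
        (α * W n (α * s) / ((γ - α) * (α - β)) + β * W n (β * s) / ((β - γ) * (α - β))
          + γ * W n (γ * s) / ((β - γ) * (γ - α))))
      atTop (𝓝 ((β * W n (β * s) - γ * W n (γ * s)) / (β - γ))) := by
  have hpole := (tendsto_sub_div_sub_atTop c γ).neg.mul (tendsto_sub_div_sub_atTop 0 β)
    |>.mul ((tendsto_W_atTop n).comp (tendsto_id.atTop_mul_const hs))
  have hβ := (tendsto_sub_div_sub_atTop c β).const_mul (β * W n (β * s) / (β - γ))
  have hγ := (tendsto_sub_div_sub_atTop c γ).neg.const_mul (γ * W n (γ * s) / (β - γ))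
  convert (hpole.add hβ).add hγ using 2 with α
  · simp only [Function.comp_apply, id, sub_zero, ← neg_sub α γ, div_eq_mul_inv, mul_inv,
      inv_neg]
    ring
  · ring

theorem irreversible_with_degradation_limit_general
    (k_d r0 t : ℝ) (hkd : 0 < k_d) (ht : 0 < t) :
    Tendsto (fun k_f : ℝ =>
        (k_f * Real.exp (-k_d * t) / (4 * Real.pi * r0)) *
          ((1 + k_f / (4 * Real.pi))
              * W ((r0 - 1) / (2 * Real.sqrt t)) ((1 + k_f / (4 * Real.pi)) * Real.sqrt t)
              / (((-Real.sqrt k_d) - (1 + k_f / (4 * Real.pi)))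
                  * ((1 + k_f / (4 * Real.pi)) - Real.sqrt k_d))
            + Real.sqrt k_d
              * W ((r0 - 1) / (2 * Real.sqrt t)) (Real.sqrt k_d * Real.sqrt t)
              / ((Real.sqrt k_d - (-Real.sqrt k_d))
                  * ((1 + k_f / (4 * Real.pi)) - Real.sqrt k_d))
            + (-Real.sqrt k_d)
              * W ((r0 - 1) / (2 * Real.sqrt t)) ((-Real.sqrt k_d) * Real.sqrt t)
              / ((Real.sqrt k_d - (-Real.sqrt k_d))
                  * ((-Real.sqrt k_d) - (1 + k_f / (4 * Real.pi))))))
      atTop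
      (𝓝 ((1 / (2 * r0)) *
        (Real.exp (Real.sqrt k_d * (r0 - 1))
            * erfc ((r0 - 1) / (2 * Real.sqrt t) + Real.sqrt (k_d * t))
          + Real.exp (-Real.sqrt k_d * (r0 - 1))
            * erfc ((r0 - 1) / (2 * Real.sqrt t) - Real.sqrt (k_d * t))))) := by
  have hβ : 0 < √k_d := sqrt_pos.2 hkd
  have hs : 0 < √t := sqrt_pos.2 ht
  have hα : Tendsto (fun k_f : ℝ => 1 + k_f / (4 * π)) atTop atTop :=
    tendsto_atTop_add_const_left _ 1 (tendsto_id.atTop_div_const (by positivity))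
  have hF := ((tendsto_sub_mul_partialFractions_W 1 ((r0 - 1) / (2 * √t)) (√k_d) (-√k_d)
    hs).comp hα).const_mul (exp (-k_d * t) / r0)
  have hsq : (√k_d * √t) ^ 2 = k_d * t := by
    rw [mul_pow, sq_sqrt hkd.le, sq_sqrt ht.le]
  have hcross : 2 * ((r0 - 1) / (2 * √t)) * (√k_d * √t) = √k_d * (r0 - 1) := by
    field_simp
  have hplus := exp_neg_sq_mul_W ((r0 - 1) / (2 * √t)) (√k_d * √t)
  have hminus := exp_neg_sq_mul_W ((r0 - 1) / (2 * √t)) (-√k_d * √t)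
  rw [neg_mul, neg_sq, hsq, mul_neg, hcross, ← neg_mul, ← sub_eq_add_neg, ← neg_mul,
    ← neg_mul] at hminus
  rw [hsq, hcross, ← neg_mul] at hplus
  convert hF using 2 with k_f
  · simp only [Function.comp_apply]
    ring
  · rw [sqrt_mul hkd.le, ← hplus, ← hminus]
    field_simp
    ring

/-- (Corollary 1: irreversible reaction with degradation.) Fix `k_d > 0`, `r0 > 1`, `t > 0`.
For `k_f` set `α = 1 + k_f/(4π)`, `β = √k_d`, `γ = −√k_d`, and let `F(k_f)` be the channel
impulse response. Then as `k_f → ∞`, `F(k_f)` converges to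
`(1/(2r0))·[ exp(√k_d·(r0−1))·erfc((r0−1)/(2√t) + √(k_d·t))
  + exp(−√k_d·(r0−1))·erfc((r0−1)/(2√t) − √(k_d·t)) ]`. -/
theorem irreversible_with_degradation_limit
    (k_d r0 t : ℝ) (hkd : 0 < k_d) (hr0 : 1 < r0) (ht : 0 < t) :
    Tendsto (fun k_f : ℝ =>
        (k_f * Real.exp (-k_d * t) / (4 * Real.pi * r0)) *
          ((1 + k_f / (4 * Real.pi))
              * W ((r0 - 1) / (2 * Real.sqrt t)) ((1 + k_f / (4 * Real.pi)) * Real.sqrt t)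
              / (((-Real.sqrt k_d) - (1 + k_f / (4 * Real.pi)))
                  * ((1 + k_f / (4 * Real.pi)) - Real.sqrt k_d))
            + Real.sqrt k_d
              * W ((r0 - 1) / (2 * Real.sqrt t)) (Real.sqrt k_d * Real.sqrt t)
              / ((Real.sqrt k_d - (-Real.sqrt k_d))
                  * ((1 + k_f / (4 * Real.pi)) - Real.sqrt k_d))
            + (-Real.sqrt k_d)
              * W ((r0 - 1) / (2 * Real.sqrt t)) ((-Real.sqrt k_d) * Real.sqrt t)
              / ((Real.sqrt k_d - (-Real.sqrt k_d))
                  * ((-Real.sqrt k_d) - (1 + k_f / (4 * Real.pi))))))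
      atTop
      (𝓝 ((1 / (2 * r0)) *
        (Real.exp (Real.sqrt k_d * (r0 - 1))
            * erfc ((r0 - 1) / (2 * Real.sqrt t) + Real.sqrt (k_d * t))
          + Real.exp (-Real.sqrt k_d * (r0 - 1))
            * erfc ((r0 - 1) / (2 * Real.sqrt t) - Real.sqrt (k_d * t))))) :=
  irreversible_with_degradation_limit_general k_d r0 t hkd ht
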